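/- Let W ∈ ℝ^{m×m} be symmetric and let U_ℓ = Q Σ Rᵀ be a rank-k core SVD of U_ℓ ∈ ℝ^{m×ℓ} with respect to W, i.e. Q ∈ ℝ^{m×k} with Qᵀ W Q = I_k, R ∈ ℝ^{ℓ×k} with Rᵀ R = I_k, and Σ ∈ ℝ^{k×k} diagonal. Let C ∈ ℝ^{m×s} be a matrix of s additional columns whose residuals with respect to Q vanish, i.e. C = Q Qᵀ W C. Let Q̃ Σ̃ R̃ᵀ be a thin SVD of the k×(k+s) matrix [Σ | Qᵀ W C], i.e. Q̃ ∈ ℝ^{k×k} with Q̃ᵀ Q̃ = I_k, Σ̃ ∈ ℝ^{k×k} diagonal with nonnegative entries, and R̃ ∈ ℝ^{(k+s)×k} with R̃ᵀ R̃ = I_k. Then [U_ℓ | C] = (Q Q̃) Σ̃ ( [[R, 0],[0, I_s]] R̃ )ᵀ, and this is a core SVD of U_{ℓ+s} = [U_ℓ | C] with respect to W: (Q Q̃)ᵀ W (Q Q̃) = I_k and ( [[R, 0],[0, I_s]] R̃ )ᵀ ( [[R, 0],[0, I_s]] R̃ ) = I_k. -/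

import Mathlib

open Matrix

noncomputable section

/-! Since the columns of `C` lie in the range of `Q`, `C = Q (Qᵀ W C)`, so
`[U | C] = Q [Σ | Qᵀ W C] diag(R, I)ᵀ`; substituting the thin SVD of the middle factor gives the
factorization, and products of `W`-orthonormal and orthonormal factors stay orthonormal. -/

/-- `[A | C]`: the matrix obtained by appending the columns of `C` after those of `A`. -/
def appendCols {m n n' : Type*} (A : Matrix m n ℝ) (C : Matrix m n' ℝ) :
    Matrix m (n ⊕ n') ℝ :=
  Matrix.of fun i => Sum.elim (A i) (C i)

namespace Matrix

variable {α : Type*} [CommRing α]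

lemma transpose_mul_mul_mul_eq_one {m n k : Type*} [Fintype m] [Fintype n] [DecidableEq n]
    [DecidableEq k] {W : Matrix m m α} {Q : Matrix m n α} {P : Matrix n k α}
    (hQ : Qᵀ * W * Q = 1) (hP : Pᵀ * P = 1) : (Q * P)ᵀ * W * (Q * P) = 1 :=
  calc (Q * P)ᵀ * W * (Q * P) = Pᵀ * (Qᵀ * W * Q) * P := by
        simp only [transpose_mul, Matrix.mul_assoc]
    _ = 1 := by rw [hQ, Matrix.mul_one, hP]

lemma transpose_mul_mul_self_eq_one {m n k : Type*} [Fintype m] [Fintype n] [DecidableEq m]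
    [DecidableEq n] [DecidableEq k] {Q : Matrix m n α} {P : Matrix n k α}
    (hQ : Qᵀ * Q = 1) (hP : Pᵀ * P = 1) : (Q * P)ᵀ * (Q * P) = 1 := by
  simpa using transpose_mul_mul_mul_eq_one (W := 1) (Q := Q) (by rwa [Matrix.mul_one]) hP

lemma fromBlocks_transpose_mul_self_eq_one {l k s : Type*} [Fintype l] [Fintype s]
    [DecidableEq k] [DecidableEq s] {R : Matrix l k α} (hR : Rᵀ * R = 1) :
    (fromBlocks R 0 0 1 : Matrix (l ⊕ s) (k ⊕ s) α)ᵀ *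
      (fromBlocks R 0 0 1 : Matrix (l ⊕ s) (k ⊕ s) α) = 1 := by
  simp [fromBlocks_transpose, fromBlocks_multiply, hR, fromBlocks_one]

lemma fromCols_mul_mul_transpose {m k n l s : Type*} [Fintype k] [Fintype n] [Fintype s]
    [DecidableEq s] (Q : Matrix m k α) (D : Matrix k n α) (R : Matrix l n α) (X : Matrix k s α) :
    fromCols (Q * D * Rᵀ) (Q * X) =
      Q * fromCols D X * (fromBlocks R 0 0 1 : Matrix (l ⊕ s) (n ⊕ s) α)ᵀ := by
  rw [fromBlocks_transpose, mul_fromCols, fromCols_mul_fromBlocks]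
  simp [Matrix.mul_assoc]

end Matrix

theorem stmt5_general {m ℓ k s : ℕ}
    (W : Matrix (Fin m) (Fin m) ℝ)
    (U : Matrix (Fin m) (Fin ℓ) ℝ)
    (Q : Matrix (Fin m) (Fin k) ℝ) (σ : Fin k → ℝ)
    (R : Matrix (Fin ℓ) (Fin k) ℝ)
    (hU : U = Q * diagonal σ * Rᵀ)
    (hQ : Qᵀ * W * Q = 1) (hR : Rᵀ * R = 1)
    (C : Matrix (Fin m) (Fin s) ℝ)
    (hC : C = Q * Qᵀ * W * C)
    (Qt : Matrix (Fin k) (Fin k) ℝ) (σt : Fin k → ℝ)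
    (Rt : Matrix (Fin k ⊕ Fin s) (Fin k) ℝ)
    (hQt : Qtᵀ * Qt = 1) (hRt : Rtᵀ * Rt = 1)
    (hSVD : appendCols (diagonal σ) (Qᵀ * W * C) = Qt * diagonal σt * Rtᵀ) :
    appendCols U C =
      (Q * Qt) * diagonal σt *
        ((fromBlocks R 0 0 1 : Matrix (Fin ℓ ⊕ Fin s) (Fin k ⊕ Fin s) ℝ) * Rt)ᵀ ∧
    (Q * Qt)ᵀ * W * (Q * Qt) = 1 ∧
    ((fromBlocks R 0 0 1 : Matrix (Fin ℓ ⊕ Fin s) (Fin k ⊕ Fin s) ℝ) * Rt)ᵀ *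
      ((fromBlocks R 0 0 1 : Matrix (Fin ℓ ⊕ Fin s) (Fin k ⊕ Fin s) ℝ) * Rt) = 1 := by
  refine ⟨?_, transpose_mul_mul_mul_eq_one hQ hQt,
    transpose_mul_mul_self_eq_one (fromBlocks_transpose_mul_self_eq_one hR) hRt⟩
  have hCQ : C = Q * (Qᵀ * W * C) := by rw [← Matrix.mul_assoc, ← Matrix.mul_assoc, ← hC]
  calc appendCols U C = fromCols (Q * diagonal σ * Rᵀ) (Q * (Qᵀ * W * C)) := by
        rw [hU, ← hCQ]; rfl
    _ = Q * appendCols (diagonal σ) (Qᵀ * W * C) *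
          (fromBlocks R 0 0 1 : Matrix (Fin ℓ ⊕ Fin s) (Fin k ⊕ Fin s) ℝ)ᵀ :=
        fromCols_mul_mul_transpose _ _ _ _
    _ = _ := by rw [hSVD, transpose_mul]; simp only [Matrix.mul_assoc]

theorem stmt5 {m ℓ k s : ℕ}
    (W : Matrix (Fin m) (Fin m) ℝ) (hW : W.IsSymm)
    (U : Matrix (Fin m) (Fin ℓ) ℝ)
    (Q : Matrix (Fin m) (Fin k) ℝ) (σ : Fin k → ℝ)
    (R : Matrix (Fin ℓ) (Fin k) ℝ)
    (hU : U = Q * diagonal σ * Rᵀ)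
    (hQ : Qᵀ * W * Q = 1) (hR : Rᵀ * R = 1)
    (C : Matrix (Fin m) (Fin s) ℝ)
    (hC : C = Q * Qᵀ * W * C)
    (Qt : Matrix (Fin k) (Fin k) ℝ) (σt : Fin k → ℝ)
    (Rt : Matrix (Fin k ⊕ Fin s) (Fin k) ℝ)
    (hQt : Qtᵀ * Qt = 1) (hσt : ∀ i, 0 ≤ σt i) (hRt : Rtᵀ * Rt = 1)
    (hSVD : appendCols (diagonal σ) (Qᵀ * W * C) = Qt * diagonal σt * Rtᵀ) :
    appendCols U C =
      (Q * Qt) * diagonal σt *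
        ((fromBlocks R 0 0 1 : Matrix (Fin ℓ ⊕ Fin s) (Fin k ⊕ Fin s) ℝ) * Rt)ᵀ ∧
    (Q * Qt)ᵀ * W * (Q * Qt) = 1 ∧
    ((fromBlocks R 0 0 1 : Matrix (Fin ℓ ⊕ Fin s) (Fin k ⊕ Fin s) ℝ) * Rt)ᵀ *
      ((fromBlocks R 0 0 1 : Matrix (Fin ℓ ⊕ Fin s) (Fin k ⊕ Fin s) ℝ) * Rt) = 1 :=
  stmt5_general W U Q σ R hU hQ hR C hC Qt σt Rt hQt hRt hSVD
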